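/- arXiv:2409.00715 — 2 statements merged into one kernel-verified Lean document; each statement's English description precedes it below -/
import Mathlib

section
/- For a, b real with 0 < a ≤ b, the inequality ∫₀¹ (a/(4√t)) log((b + a√t)/(b − a√t)) dt ≤ (a²/b)·log 2 holds. -/
/-!
With `x = a / b ∈ (0, 1]` the integrand is `(b / 2) · (x / (2√t)) · log ((1 + x√t) / (1 - x√t))`,
the derivative of `t ↦ H (x√t)` for `H = mulLogSum`,
`H y = (1 + y) log (1 + y) + (1 - y) log (1 - y)`. So the integral equals `(b / 2) H x`,
and `H 1 = 2 log 2`. The odd power series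
`log ((1 + y) / (1 - y)) = 2 ∑ y^(2k+1) / (2k+1)` gives
`log ((1 + x y) / (1 - x y)) ≤ x log ((1 + y) / (1 - y))` for `0 ≤ x ≤ 1`, `0 ≤ y < 1`;
integrating this against `x / (2√t)` yields `H x ≤ x² H 1`.
-/

open Real Set MeasureTheory

theorem log_one_add_mul_div_one_sub_mul_le {x y : ℝ} (hx₀ : 0 ≤ x) (hx₁ : x ≤ 1)
    (hy₀ : 0 ≤ y) (hy₁ : y < 1) :
    log ((1 + x * y) / (1 - x * y)) ≤ x * log ((1 + y) / (1 - y)) := by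
  have hxy₀ : 0 ≤ x * y := mul_nonneg hx₀ hy₀
  have hxy₁ : x * y < 1 := by nlinarith
  rw [log_div (by linarith) (by linarith), log_div (by linarith) (by linarith)]
  refine hasSum_le (fun k => ?_)
    (hasSum_log_sub_log_of_abs_lt_one (abs_lt.2 ⟨by nlinarith, hxy₁⟩))
    ((hasSum_log_sub_log_of_abs_lt_one (abs_lt.2 ⟨by linarith, hy₁⟩)).mul_left x)
  have hpow : x ^ (2 * k + 1) ≤ x := pow_le_of_le_one hx₀ hx₁ (by omega)
  rw [mul_pow]
  have : 0 ≤ 2 * (1 / (2 * (k : ℝ) + 1)) * y ^ (2 * k + 1) := by positivity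
  nlinarith

noncomputable def mulLogSum (y : ℝ) : ℝ := (1 + y) * log (1 + y) + (1 - y) * log (1 - y)

theorem continuous_mulLogSum : Continuous mulLogSum :=
  (continuous_const.add continuous_id).mul_log.add (continuous_const.sub continuous_id).mul_log

theorem mulLogSum_zero : mulLogSum 0 = 0 := by simp [mulLogSum]

theorem mulLogSum_one : mulLogSum 1 = 2 * log 2 := by norm_num [mulLogSum]

theorem hasDerivAt_mulLogSum {y : ℝ} (hy : |y| < 1) :
    HasDerivAt mulLogSum (log ((1 + y) / (1 - y))) y := by
  obtain ⟨hy₀, hy₁⟩ := abs_lt.1 hy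
  have hplus := (hasDerivAt_mul_log (by linarith : 1 + y ≠ 0)).comp y
    ((hasDerivAt_id y).const_add 1)
  have hminus := (hasDerivAt_mul_log (by linarith : 1 - y ≠ 0)).comp y
    ((hasDerivAt_id y).const_sub 1)
  refine HasDerivAt.congr_deriv (f := mulLogSum) (hplus.add hminus) ?_
  rw [log_div (by linarith) (by linarith)]
  ring

theorem hasDerivAt_mulLogSum_mul_sqrt {c t : ℝ} (ht : 0 < t) (hct : |c * √t| < 1) :
    HasDerivAt (fun t => mulLogSum (c * √t))
      (c / (2 * √t) * log ((1 + c * √t) / (1 - c * √t))) t := by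
  have h := (hasDerivAt_mulLogSum hct).comp t ((hasDerivAt_sqrt ht.ne').const_mul c)
  refine h.congr_deriv ?_
  field_simp

theorem mul_log_one_add_div_one_sub_nonneg {c u : ℝ} (hc₀ : 0 ≤ c) (hu₀ : 0 ≤ u)
    (hcu : c * u < 1) : 0 ≤ c / (2 * u) * log ((1 + c * u) / (1 - c * u)) := by
  have hcu₀ : 0 ≤ c * u := mul_nonneg hc₀ hu₀
  have hlog : 0 ≤ log ((1 + c * u) / (1 - c * u)) :=
    log_nonneg ((one_le_div (by linarith)).2 (by linarith))
  positivity

theorem abs_mul_sqrt_lt_one {c t : ℝ} (hc₀ : 0 ≤ c) (hc₁ : c ≤ 1) (ht : t ∈ Ioo (0 : ℝ) 1) :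
    |c * √t| < 1 := by
  have hsqrt : √t < 1 := (sqrt_lt' one_pos).2 (by simpa using ht.2)
  rw [abs_of_nonneg (by positivity)]
  nlinarith [sqrt_nonneg t]

theorem intervalIntegrable_mul_log_one_add_div_one_sub {c : ℝ} (hc₀ : 0 ≤ c) (hc₁ : c ≤ 1) :
    IntervalIntegrable (fun t => c / (2 * √t) * log ((1 + c * √t) / (1 - c * √t))) volume 0 1 :=
  (intervalIntegrable_iff_integrableOn_Ioc_of_le zero_le_one).2 <|
    intervalIntegral.integrableOn_deriv_of_nonneg
      (continuous_mulLogSum.comp (continuous_const.mul continuous_sqrt)).continuousOn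
      (fun _ ht => hasDerivAt_mulLogSum_mul_sqrt ht.1 (abs_mul_sqrt_lt_one hc₀ hc₁ ht))
      (fun t ht => mul_log_one_add_div_one_sub_nonneg hc₀ (sqrt_nonneg t)
        (lt_of_abs_lt (abs_mul_sqrt_lt_one hc₀ hc₁ ht)))

theorem integral_mul_log_one_add_div_one_sub {c : ℝ} (hc₀ : 0 ≤ c) (hc₁ : c ≤ 1) :
    ∫ t in (0 : ℝ)..1, c / (2 * √t) * log ((1 + c * √t) / (1 - c * √t)) = mulLogSum c := by
  rw [intervalIntegral.integral_eq_sub_of_hasDerivAt_of_le zero_le_one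
    (continuous_mulLogSum.comp (continuous_const.mul continuous_sqrt)).continuousOn
    (fun t ht => hasDerivAt_mulLogSum_mul_sqrt ht.1 (abs_mul_sqrt_lt_one hc₀ hc₁ ht))
    (intervalIntegrable_mul_log_one_add_div_one_sub hc₀ hc₁)]
  simp [mulLogSum_zero]

theorem mulLogSum_le_sq_mul_mulLogSum_one {c : ℝ} (hc₀ : 0 ≤ c) (hc₁ : c ≤ 1) :
    mulLogSum c ≤ c ^ 2 * mulLogSum 1 := by
  have h₁ := integral_mul_log_one_add_div_one_sub zero_le_one le_rfl
  have h₁int := intervalIntegrable_mul_log_one_add_div_one_sub zero_le_one le_rfl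
  simp only [one_mul] at h₁ h₁int
  rw [← integral_mul_log_one_add_div_one_sub hc₀ hc₁, ← h₁, ← intervalIntegral.integral_const_mul]
  refine intervalIntegral.integral_mono_on_of_le_Ioo zero_le_one
    (intervalIntegrable_mul_log_one_add_div_one_sub hc₀ hc₁) (h₁int.const_mul (c ^ 2))
    fun t ht => ?_
  have hsqrt : √t < 1 := (sqrt_lt' one_pos).2 (by simpa using ht.2)
  calc c / (2 * √t) * log ((1 + c * √t) / (1 - c * √t))
      ≤ c / (2 * √t) * (c * log ((1 + √t) / (1 - √t))) := by
        gcongr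
        exact log_one_add_mul_div_one_sub_mul_le hc₀ hc₁ (sqrt_nonneg t) hsqrt
    _ = c ^ 2 * (1 / (2 * √t) * log ((1 + √t) / (1 - √t))) := by ring

/-- For `0 < a ≤ b`,
`∫₀¹ (a/(4√t)) log((b + a√t)/(b − a√t)) dt ≤ (a²/b)·log 2`. -/
theorem log_integral_ineq (a b : ℝ) (ha : 0 < a) (hab : a ≤ b) :
    (∫ t in (0:ℝ)..1,
        a / (4 * Real.sqrt t) *
          Real.log ((b + a * Real.sqrt t) / (b - a * Real.sqrt t)))
      ≤ a ^ 2 / b * Real.log 2 := by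
  have hb : 0 < b := ha.trans_le hab
  set x := a / b with hx
  have hintegrand : (fun t => a / (4 * √t) * log ((b + a * √t) / (b - a * √t))) =
      fun t => b / 2 * (x / (2 * √t) * log ((1 + x * √t) / (1 - x * √t))) := by
    funext t
    rw [show b + a * √t = b * (1 + x * √t) by rw [hx]; field_simp,
      show b - a * √t = b * (1 - x * √t) by rw [hx]; field_simp, mul_div_mul_left _ _ hb.ne', hx]
    field_simp
    ring
  have hx₀ : 0 ≤ x := by positivity
  have hx₁ : x ≤ 1 := (div_le_one hb).2 hab
  calc (∫ t in (0:ℝ)..1, a / (4 * √t) * log ((b + a * √t) / (b - a * √t)))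
      = b / 2 * mulLogSum x := by
        rw [hintegrand, intervalIntegral.integral_const_mul,
          integral_mul_log_one_add_div_one_sub hx₀ hx₁]
    _ ≤ b / 2 * (x ^ 2 * mulLogSum 1) := by
        gcongr
        exact mulLogSum_le_sq_mul_mulLogSum_one hx₀ hx₁
    _ = a ^ 2 / b * log 2 := by
        rw [mulLogSum_one, hx]
        field_simp
end

section
/- The fermionic Malliavin derivative D_t and divergence δ satisfy the canonical anti-commutation relation: for h ∈ L²(ℝ₊), f ∈ Λ_p, and the element h ⊗ J_p(f), one has D_t(δ(h ⊗ J_p(f))) + δ(h ⊗ D_t(J_p(f))) = h(t)·J_p(f). -/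
open MeasureTheory

/-- Safe indexing of a finite tuple of reals by a natural number (`0` out of range). -/
noncomputable def pad {n : ℕ} (t : Fin n → ℝ) (i : ℕ) : ℝ :=
  if h : i < n then t ⟨i, h⟩ else 0

/-- The `r`-fold contraction `(f ∧_r g)(t₁,…,t_{p+q−2r})
  = ∫ f(t₁,…,t_{p−r}, s_r,…,s₁) g(s₁,…,s_r, t_{p−r+1},…,t_{p+q−2r}) ds`. -/
noncomputable def contrN (p q r : ℕ) (f : (Fin p → ℝ) → ℂ) (g : (Fin q → ℝ) → ℂ) :
    (Fin (p + q - 2 * r) → ℝ) → ℂ := fun t =>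
  ∫ s : Fin r → ℝ,
    f (fun i => if (i : ℕ) < p - r then pad t (i : ℕ) else pad s (p - 1 - (i : ℕ))) *
    g (fun j => if (j : ℕ) < r then pad s (j : ℕ) else pad t (p - 2 * r + (j : ℕ)))

/-- Anti-symmetrization `ĥ(t₁,…,tₙ) = (1/n!) Σ_{σ∈Sₙ} sgn(σ) h(t_{σ(1)},…,t_{σ(n)})`. -/
noncomputable def asymN {n : ℕ} (h : (Fin n → ℝ) → ℂ) : (Fin n → ℝ) → ℂ := fun t =>
  (n.factorial : ℂ)⁻¹ * ∑ σ : Equiv.Perm (Fin n), ((Equiv.Perm.sign σ : ℤ) : ℂ) * h (t ∘ σ)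

/-- The anti-symmetrized `r`-fold contraction `f ∧̂_r g`. -/
noncomputable def contrHat (p q r : ℕ) (f : (Fin p → ℝ) → ℂ) (g : (Fin q → ℝ) → ℂ) :
    (Fin (p + q - 2 * r) → ℝ) → ℂ :=
  asymN (contrN p q r f g)

/-- `f` is anti-symmetric (i.e. `f ∈ Λ_n` as a pointwise condition). -/
def IsAntisym {n : ℕ} (f : (Fin n → ℝ) → ℂ) : Prop :=
  ∀ (σ : Equiv.Perm (Fin n)) (x : Fin n → ℝ), f (x ∘ σ) = ((Equiv.Perm.sign σ : ℤ) : ℂ) * f x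

/-- `sub1 n f t = f(t, ·)`: fixing the first variable of `f` at `t`. -/
noncomputable def sub1 (n : ℕ) (f : (Fin n → ℝ) → ℂ) (t : ℝ) : (Fin (n - 1) → ℝ) → ℂ :=
  fun y => f (fun i => if (i : ℕ) = 0 then t else pad y ((i : ℕ) - 1))

/-! Both sides are images under the linear map `J p`, so it suffices to compare kernels at a
point `y`. Grouping the permutations of `Fin (n + 1)` by the image of `0`
(`Equiv.Perm.decomposeFin`) and using antisymmetry in the remaining variables, `n + 1` times the
antisymmetrization of `x ↦ φ (x 0) (x ∘ Fin.succ)` collapses to the alternating sum of the `n + 1`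
terms obtained by moving each variable to the front. Applied at `(t, y)` to `h ⊗ f`, the front term
gives `h t * f y` and the others `-∑ b, h (y b) * f (y[b ↦ t])`; applied at `y` to `h ⊗ f (t, ·)` the
same expansion gives `+∑ b, h (y b) * f (y[b ↦ t])`, and the two sums cancel. -/

open Equiv Equiv.Perm

lemma Int.cast_units_mul_self {R : Type*} [Ring R] (u : ℤˣ) : ((u : ℤ) : R) * (u : ℤ) = 1 := by
  rw [← Int.cast_mul, ← Units.val_mul, Int.units_mul_self, Units.val_one, Int.cast_one]

lemma Fin.cons_comp_swap_succ_comp_succ {α : Type*} {n : ℕ} (t : α) (y : Fin n → α) (b : Fin n) :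
    (Fin.cons t y : Fin (n + 1) → α) ∘ swap 0 b.succ ∘ Fin.succ = Function.update y b t := by
  funext i
  rcases eq_or_ne i b with rfl | hib
  · simp
  · have : swap 0 b.succ i.succ = i.succ :=
      swap_apply_of_ne_of_ne (Fin.succ_ne_zero i) (Fin.succ_injective _ |>.ne hib)
    simp [this, hib]

lemma Fin.cons_comp_swap_comp_succ {α : Type*} {n : ℕ} (t : α) (y : Fin (n + 1) → α)
    (b : Fin (n + 1)) :
    (Fin.cons t (y ∘ swap 0 b ∘ Fin.succ) : Fin (n + 1) → α) = Function.update y b t ∘ swap 0 b := by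
  funext i
  refine Fin.cases ?_ (fun j => ?_) i
  · simp
  · have : swap 0 b j.succ ≠ b := by
      rw [Ne, swap_apply_eq_iff, swap_apply_right]; exact Fin.succ_ne_zero j
    simp [this]

lemma sub1_succ {n : ℕ} (g : (Fin (n + 1) → ℝ) → ℂ) (t : ℝ) (y : Fin n → ℝ) :
    sub1 (n + 1) g t y = g (Fin.cons t y) := by
  unfold sub1
  congr 1
  funext i
  refine Fin.cases ?_ (fun j => ?_) i
  · simp
  · simp [pad]

lemma pad_succ_eq_comp_succ {n : ℕ} (x : Fin (n + 1) → ℝ) :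
    (fun i : Fin n => pad x ((i : ℕ) + 1)) = x ∘ Fin.succ := by
  funext i
  simp [pad, Fin.succ]

section Antisymmetrization

variable {n : ℕ}

lemma IsAntisym.const_mul {f : (Fin n → ℝ) → ℂ} (hf : IsAntisym f) (c : ℂ) :
    IsAntisym fun x => c * f x := fun σ x => by
  simp only [hf σ x]; ring

lemma IsAntisym.comp_cons {f : (Fin (n + 1) → ℝ) → ℂ} (hf : IsAntisym f) (t : ℝ) :
    IsAntisym fun x : Fin n → ℝ => f (Fin.cons t x) := fun e x => by
  have : (Fin.cons t (x ∘ e) : Fin (n + 1) → ℝ) = Fin.cons t x ∘ decomposeFin.symm (0, e) := by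
    funext i
    refine Fin.cases ?_ (fun j => ?_) i <;> simp [decomposeFin_symm_apply_succ]
  simp [this, hf _ (Fin.cons t x), decomposeFin.symm_sign]

lemma asymN_const_mul (c : ℂ) (g : (Fin n → ℝ) → ℂ) (x : Fin n → ℝ) :
    asymN (fun x => c * g x) x = c * asymN g x := by
  simp only [asymN, Finset.mul_sum]
  exact Finset.sum_congr rfl fun σ _ => by ring

theorem succ_mul_asymN_eq_sum_swap (φ : ℝ → (Fin n → ℝ) → ℂ) (hφ : ∀ s, IsAntisym (φ s))
    (x : Fin (n + 1) → ℝ) :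
    ((n : ℂ) + 1) * asymN (fun x => φ (x 0) (x ∘ Fin.succ)) x =
      ∑ a, ((sign (swap 0 a) : ℤ) : ℂ) * φ (x a) (x ∘ swap 0 a ∘ Fin.succ) := by
  have coset : ∀ a e, ((sign (decomposeFin.symm (a, e)) : ℤ) : ℂ) *
      φ ((x ∘ decomposeFin.symm (a, e)) 0) ((x ∘ decomposeFin.symm (a, e)) ∘ Fin.succ) =
      ((sign (swap 0 a) : ℤ) : ℂ) * φ (x a) (x ∘ swap 0 a ∘ Fin.succ) := by
    intro a e
    have hsign : sign (decomposeFin.symm (a, e)) = sign (swap 0 a) * sign e := by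
      rw [decomposeFin.symm_sign, sign_swap']
      simp only [eq_comm (a := (0 : Fin (n + 1)))]
    have hcomp : (x ∘ decomposeFin.symm (a, e)) ∘ Fin.succ = (x ∘ swap 0 a ∘ Fin.succ) ∘ e := by
      funext i; simp [decomposeFin_symm_apply_succ]
    rw [hcomp, hφ, hsign, Function.comp_apply, decomposeFin_symm_apply_zero, Units.val_mul,
      Int.cast_mul, mul_assoc, ← mul_assoc ((sign e : ℤ) : ℂ), Int.cast_units_mul_self, one_mul]
  have hfac : ((n : ℂ) + 1) * ((n + 1).factorial : ℂ)⁻¹ * n.factorial = 1 := by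
    have : (n.factorial : ℂ) ≠ 0 := Nat.cast_ne_zero.2 n.factorial_ne_zero
    rw [Nat.factorial_succ]; push_cast; field_simp
  unfold asymN
  rw [← Equiv.sum_comp decomposeFin.symm, Fintype.sum_prod_type]
  simp_rw [coset, Finset.sum_const, Finset.card_univ, Fintype.card_perm, Fintype.card_fin,
    nsmul_eq_mul]
  rw [← Finset.mul_sum, ← mul_assoc, ← mul_assoc, hfac, one_mul]

lemma succ_mul_asymN_tensor_cons (h : ℝ → ℂ) {f : (Fin n → ℝ) → ℂ} (hf : IsAntisym f) (t : ℝ)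
    (y : Fin n → ℝ) :
    ((n : ℂ) + 1) * asymN (fun x : Fin (n + 1) → ℝ => h (x 0) * f (x ∘ Fin.succ)) (Fin.cons t y) =
      h t * f y - ∑ b, h (y b) * f (Function.update y b t) := by
  rw [succ_mul_asymN_eq_sum_swap (fun s z => h s * f z) (fun s => hf.const_mul (h s)),
    Fin.sum_univ_succ]
  simp [sign_swap (Fin.succ_ne_zero _).symm, Fin.cons_comp_swap_succ_comp_succ, sub_eq_add_neg]

lemma asymN_tensor_sub1 (h : ℝ → ℂ) {f : (Fin n → ℝ) → ℂ} (hf : IsAntisym f) (t : ℝ)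
    (y : Fin n → ℝ) :
    asymN (fun x : Fin n → ℝ =>
        (n : ℂ) * h (pad x 0) * sub1 n f t (fun i => pad x ((i : ℕ) + 1))) y =
      ∑ b, h (y b) * f (Function.update y b t) := by
  cases n with
  | zero => simp [asymN]
  | succ m =>
    have hg : (fun x : Fin (m + 1) → ℝ =>
        ((m + 1 : ℕ) : ℂ) * h (pad x 0) * sub1 (m + 1) f t (fun i => pad x ((i : ℕ) + 1))) =
        fun x => ((m : ℂ) + 1) * (h (x 0) * f (Fin.cons t (x ∘ Fin.succ))) := by
      funext x
      rw [pad_succ_eq_comp_succ, sub1_succ]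
      simp [pad, mul_assoc]
    rw [hg, asymN_const_mul, succ_mul_asymN_eq_sum_swap (fun s z => h s * f (Fin.cons t z))
      (fun s => (hf.comp_cons t).const_mul (h s))]
    refine Finset.sum_congr rfl fun b _ => ?_
    rw [Fin.cons_comp_swap_comp_succ, hf, mul_left_comm (h _), ← mul_assoc,
      Int.cast_units_mul_self, one_mul]

end Antisymmetrization

/-- Here `δ(h ⊗ J_p(f)) = J_{p+1}` of the full anti-symmetrization of `(s,x) ↦ h(s)f(x)`,
`D_t(J_n(v)) = n·J_{n−1}(v(t,·))`, and
`δ(h ⊗ D_t(J_p(f))) = J_p` of the full anti-symmetrization of `(s,y) ↦ p·h(s)·f(t,y)`. -/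
theorem clifford_malliavin_car_general (M : Type*) [AddCommGroup M] [Module ℂ M]
    (J : (n : ℕ) → ((Fin n → ℝ) → ℂ) →ₗ[ℂ] M)
    (p : ℕ) (h : ℝ → ℂ)
    (f : (Fin p → ℝ) → ℂ) (hf : IsAntisym f) :
    ∀ t : ℝ,
      ((p : ℂ) + 1) •
          J p (sub1 (p + 1)
            (asymN (fun x : Fin (p + 1) → ℝ => h (x 0) * f (x ∘ Fin.succ))) t)
        + J p (asymN (fun x : Fin p → ℝ =>
            (p : ℂ) * h (pad x 0) * sub1 p f t (fun i => pad x ((i : ℕ) + 1))))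
        = h t • J p f := by
  intro t
  rw [← map_smul, ← map_add, ← map_smul]
  congr 1
  funext y
  simp only [Pi.add_apply, Pi.smul_apply, smul_eq_mul, sub1_succ, succ_mul_asymN_tensor_cons h hf,
    asymN_tensor_sub1 h hf]
  ring

/-- The canonical anti-commutation relation between the fermionic Malliavin derivative
and divergence: `D_t(δ(h ⊗ J_p(f))) + δ(h ⊗ D_t(J_p(f))) = h(t)·J_p(f)`.
Here `δ(h ⊗ J_p(f)) = J_{p+1}` of the full anti-symmetrization of `(s,x) ↦ h(s)f(x)`,
`D_t(J_n(v)) = n·J_{n−1}(v(t,·))`, and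
`δ(h ⊗ D_t(J_p(f))) = J_p` of the full anti-symmetrization of `(s,y) ↦ p·h(s)·f(t,y)`. -/
theorem clifford_malliavin_car (M : Type*) [AddCommGroup M] [Module ℂ M]
    (J : (n : ℕ) → ((Fin n → ℝ) → ℂ) →ₗ[ℂ] M)
    (p : ℕ) (h : ℝ → ℂ) (hh : MemLp h 2 (volume : Measure ℝ))
    (f : (Fin p → ℝ) → ℂ) (hf : IsAntisym f)
    (hf2 : MemLp f 2 (volume : Measure (Fin p → ℝ))) :
    ∀ t : ℝ,
      ((p : ℂ) + 1) •
          J p (sub1 (p + 1)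
            (asymN (fun x : Fin (p + 1) → ℝ => h (x 0) * f (x ∘ Fin.succ))) t)
        + J p (asymN (fun x : Fin p → ℝ =>
            (p : ℂ) * h (pad x 0) * sub1 p f t (fun i => pad x ((i : ℕ) + 1))))
        = h t • J p f :=
  clifford_malliavin_car_general M J p h f hf
end
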